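/- arXiv:math/0511006 — 2 statements merged into one kernel-verified Lean document; each statement's English description precedes it below -/
import Mathlib

section
/- For each η ∈ ℤ^N, the operator v_η := P u_η restricted to ℓ²(ℤ^N_<) is a partial isometry on ℓ²(ℤ^N_<). -/
noncomputable section
open scoped Classical

/-- `ℓ²(ι)` with complex coefficients. -/
abbrev l2 (ι : Type*) := lp (fun _ : ι => ℂ) 2

namespace Heis

variable {ι κ : Type*}


lemma two_toReal : (2 : ENNReal).toReal = 2 := by simp

lemma memℓp_indicator (E : Set ι) [DecidablePred (· ∈ E)] (f : l2 ι) :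
    Memℓp (fun i => if i ∈ E then f i else 0) 2 := by
  apply memℓp_gen
  apply Summable.of_nonneg_of_le (fun i => by positivity)
    (fun i => ?_) ((lp.memℓp f).summable (by rw [two_toReal]; norm_num))
  by_cases h : i ∈ E <;> simp [h]

/-- Multiplication by the characteristic function of `E` on `ℓ²(ι)`. -/
def mulInd (E : Set ι) [DecidablePred (· ∈ E)] : l2 ι →L[ℂ] l2 ι :=
  LinearMap.mkContinuous
    { toFun := fun f => ⟨fun i => if i ∈ E then f i else 0, memℓp_indicator E f⟩
      map_add' := by
        intro f g; apply lp.ext; funext i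
        show (if i ∈ E then (f + g) i else 0)
            = (if i ∈ E then f i else 0) + (if i ∈ E then g i else 0)
        have h1 : (⇑(f + g) : ∀ _ : ι, ℂ) i = f i + g i := by rw [lp.coeFn_add]; rfl
        rw [h1]; by_cases h : i ∈ E <;> simp [h]
      map_smul' := by
        intro c f; apply lp.ext; funext i
        show (if i ∈ E then (c • f) i else 0) = c • (if i ∈ E then f i else 0)
        have h1 : (⇑(c • f) : ∀ _ : ι, ℂ) i = c • f i := by rw [lp.coeFn_smul]; rfl
        rw [h1]; by_cases h : i ∈ E <;> simp [h] }
    1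
    (by
      intro f
      rw [one_mul]
      apply lp.norm_le_of_forall_sum_le (by rw [two_toReal]; norm_num) (norm_nonneg f)
      intro s
      calc ∑ i ∈ s, ‖(if i ∈ E then f i else 0 : ℂ)‖ ^ (2 : ENNReal).toReal
          ≤ ∑ i ∈ s, ‖f i‖ ^ (2 : ENNReal).toReal := by
            apply Finset.sum_le_sum
            intro i _
            by_cases h : i ∈ E <;> simp [h, two_toReal]
        _ ≤ ‖f‖ ^ (2 : ENNReal).toReal :=
            lp.sum_rpow_le_norm_rpow (by rw [two_toReal]; norm_num) f s)

@[simp] lemma mulInd_apply (E : Set ι) [DecidablePred (· ∈ E)] (f : l2 ι) (i : ι) :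
    mulInd E f i = if i ∈ E then f i else 0 := rfl

lemma memℓp_comp_equiv (e : ι ≃ ι) (f : l2 ι) : Memℓp (fun i => f (e i)) 2 := by
  apply memℓp_gen
  have := (lp.memℓp f).summable (p := 2) (by rw [two_toReal]; norm_num)
  exact (e.summable_iff (f := fun i => ‖f i‖ ^ (2 : ENNReal).toReal)).2 this

/-- The unitary on `ℓ²(ι)` induced by a bijection of the index set: `f ↦ f ∘ e`. -/
def compEquiv (e : ι ≃ ι) : l2 ι ≃ₗᵢ[ℂ] l2 ι where
  toFun f := ⟨fun i => f (e i), memℓp_comp_equiv e f⟩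
  invFun f := ⟨fun i => f (e.symm i), memℓp_comp_equiv e.symm f⟩
  left_inv f := by apply lp.ext; funext i; simp
  right_inv f := by apply lp.ext; funext i; simp
  map_add' f g := by
    apply lp.ext; funext i
    show (f + g) (e i) = _
    have h1 : (⇑(f + g) : ∀ _ : ι, ℂ) (e i) = f (e i) + g (e i) := by rw [lp.coeFn_add]; rfl
    rw [h1]; rfl
  map_smul' c f := by
    apply lp.ext; funext i
    show (c • f) (e i) = _
    have h1 : (⇑(c • f) : ∀ _ : ι, ℂ) (e i) = c • f (e i) := by rw [lp.coeFn_smul]; rfl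
    rw [h1]; rfl
  norm_map' f := by
    rw [lp.norm_eq_tsum_rpow (by rw [two_toReal]; norm_num),
      lp.norm_eq_tsum_rpow (by rw [two_toReal]; norm_num)]
    congr 1
    exact e.tsum_eq (f := fun i => ‖f i‖ ^ (2 : ENNReal).toReal)

@[simp] lemma compEquiv_apply (e : ι ≃ ι) (f : l2 ι) (i : ι) :
    compEquiv e f i = f (e i) := rfl



variable {ι κ : Type*}

lemma memℓp_restr (g : ι ↪ κ) (f : l2 κ) : Memℓp (fun i => f (g i)) 2 := by
  apply memℓp_gen
  exact ((lp.memℓp f).summable (by simp)).comp_injective g.injective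

/-- Restriction (pull-back) operator `ℓ²(κ) → ℓ²(ι)` along an injection `g : ι ↪ κ`. -/
def restr (g : ι ↪ κ) : l2 κ →L[ℂ] l2 ι :=
  LinearMap.mkContinuous
    { toFun := fun f => ⟨fun i => f (g i), memℓp_restr g f⟩
      map_add' := by
        intro f g'; apply lp.ext; funext i
        show (f + g') (g i) = f (g i) + g' (g i)
        rw [lp.coeFn_add]; rfl
      map_smul' := by
        intro c f; apply lp.ext; funext i
        show (c • f) (g i) = c • f (g i)
        rw [lp.coeFn_smul]; rfl }
    1
    (by
      intro f
      rw [one_mul]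
      apply lp.norm_le_of_forall_sum_le (by simp) (norm_nonneg f)
      intro s
      calc ∑ i ∈ s, ‖f (g i)‖ ^ (2 : ENNReal).toReal
          = ∑ k ∈ s.image g, ‖f k‖ ^ (2 : ENNReal).toReal := by
            rw [Finset.sum_image (fun a _ b _ h => g.injective h)]
        _ ≤ ‖f‖ ^ (2 : ENNReal).toReal := lp.sum_rpow_le_norm_rpow (by simp) f _)

@[simp] lemma restr_apply (g : ι ↪ κ) (f : l2 κ) (i : ι) : restr g f i = f (g i) := rfl

lemma incl_choose (g : ι ↪ κ) (i : ι) (h : ∃ j, g j = g i) : h.choose = i :=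
  g.injective h.choose_spec

lemma memℓp_incl (g : ι ↪ κ) (f : l2 ι) :
    Memℓp (fun k => if h : ∃ i, g i = k then f h.choose else 0) 2 := by
  apply memℓp_gen
  have key : (fun k => ‖if h : ∃ i, g i = k then f h.choose else 0‖ ^ (2 : ENNReal).toReal) ∘ g
      = fun i => ‖f i‖ ^ (2 : ENNReal).toReal := by
    funext i
    have h : ∃ j, g j = g i := ⟨i, rfl⟩
    simp only [Function.comp_apply, dif_pos h, incl_choose g i h]
  refine (Function.Injective.summable_iff g.injective ?_).1 ?_
  · intro k hk
    have hne : ¬ ∃ i, g i = k := by simpa [Set.range, eq_comm] using hk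
    simp [dif_neg hne]
  · rw [key]; exact (lp.memℓp f).summable (by simp)

/-- Extension-by-zero operator `ℓ²(ι) → ℓ²(κ)` along an injection `g : ι ↪ κ`. -/
def incl (g : ι ↪ κ) : l2 ι →L[ℂ] l2 κ :=
  LinearMap.mkContinuous
    { toFun := fun f => ⟨fun k => if h : ∃ i, g i = k then f h.choose else 0, memℓp_incl g f⟩
      map_add' := by
        intro f g'; apply lp.ext; funext k
        show (if h : ∃ i, g i = k then (f + g') h.choose else 0)
            = (if h : ∃ i, g i = k then f h.choose else 0)
              + (if h : ∃ i, g i = k then g' h.choose else 0)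
        by_cases h : ∃ i, g i = k
        · rw [dif_pos h, dif_pos h, dif_pos h, lp.coeFn_add]; rfl
        · rw [dif_neg h, dif_neg h, dif_neg h, add_zero]
      map_smul' := by
        intro c f; apply lp.ext; funext k
        show (if h : ∃ i, g i = k then (c • f) h.choose else 0)
            = c • (if h : ∃ i, g i = k then f h.choose else 0)
        by_cases h : ∃ i, g i = k
        · rw [dif_pos h, dif_pos h, lp.coeFn_smul]; rfl
        · rw [dif_neg h, dif_neg h, smul_zero] }
    1
    (by
      intro f
      rw [one_mul]
      apply lp.norm_le_of_forall_sum_le (by simp) (norm_nonneg f)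
      intro s
      calc ∑ k ∈ s, ‖if h : ∃ i, g i = k then f h.choose else 0‖ ^ (2 : ENNReal).toReal
          = ∑ i ∈ s.preimage g g.injective.injOn,
              ‖if h : ∃ j, g j = g i then f h.choose else 0‖ ^ (2 : ENNReal).toReal := by
            rw [Finset.sum_preimage g s g.injective.injOn
              (fun k => ‖if h : ∃ i, g i = k then f h.choose else 0‖ ^ (2 : ENNReal).toReal)]
            intro k _ hk
            have hne : ¬ ∃ i, g i = k := by simpa [Set.range, eq_comm] using hk
            simp [dif_neg hne]
        _ = ∑ i ∈ s.preimage g g.injective.injOn, ‖f i‖ ^ (2 : ENNReal).toReal := by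
            apply Finset.sum_congr rfl
            intro i _
            have h : ∃ j, g j = g i := ⟨i, rfl⟩
            rw [dif_pos h, incl_choose g i h]
        _ ≤ ‖f‖ ^ (2 : ENNReal).toReal := lp.sum_rpow_le_norm_rpow (by simp) f _)

@[simp] lemma incl_apply (g : ι ↪ κ) (f : l2 ι) (k : κ) :
    incl g f k = if h : ∃ i, g i = k then f h.choose else 0 := rfl


/-- The configuration space `ℤ^N`. -/
abbrev ZN (N : ℕ) := Fin N → ℤ

/-- The set `ℤ^N_< = {x : x 0 < x 1 < ⋯}` of strictly increasing `N`-tuples of integers. -/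
def Zlt (N : ℕ) : Set (ZN N) := {x | StrictMono x}

/-- The bilateral shift (translation) `(u_η f)(ξ) = f (ξ - η)` on `ℓ²(ℤ^N)`. -/
def uop (N : ℕ) (η : ZN N) : l2 (ZN N) →L[ℂ] l2 (ZN N) :=
  (compEquiv (Equiv.subRight η)).toLinearIsometry.toContinuousLinearMap

/-- The unilateral shift `v_η = P u_η P`, i.e. the compression of `u_η` to `ℓ²(ℤ^N_<)`
(realized on the full space `ℓ²(ℤ^N)`, acting through the range of `P = mulInd (Zlt N)`). -/
def vop (N : ℕ) (η : ZN N) : l2 (ZN N) →L[ℂ] l2 (ZN N) :=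
  mulInd (Zlt N) ∘L uop N η ∘L mulInd (Zlt N)

lemma vop_apply (N : ℕ) (η : ZN N) (f : l2 (ZN N)) (ξ : ZN N) :
    vop N η f ξ = if ξ ∈ Zlt N then (if ξ - η ∈ Zlt N then f (ξ - η) else 0) else 0 := rfl

lemma vop_adjoint (N : ℕ) (η : ZN N) :
    ContinuousLinearMap.adjoint (vop N η) = vop N (-η) := by
  symm
  rw [ContinuousLinearMap.eq_adjoint_iff]
  intro f g
  rw [lp.inner_eq_tsum, lp.inner_eq_tsum,
    ← Equiv.tsum_eq (Equiv.addRight η) (fun ξ => (inner ℂ (f ξ) (vop N η g ξ) : ℂ))]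
  apply tsum_congr
  intro ζ
  simp only [Equiv.coe_addRight, vop_apply, RCLike.inner_apply, add_sub_cancel_right,
    sub_neg_eq_add]
  by_cases h1 : ζ ∈ Zlt N <;> by_cases h2 : ζ + η ∈ Zlt N <;> simp [h1, h2, mul_comm]

/-- for each `η ∈ ℤ^N`, the compression `v_η = P u_η P` of the translation `u_η`
to `ℓ²(ℤ^N_<)` is a partial isometry: `v_η v_η* v_η = v_η`. -/
theorem v_partial_isometry (N : ℕ) (η : ZN N) :
    vop N η ∘L ContinuousLinearMap.adjoint (vop N η) ∘L vop N η = vop N η := by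
  rw [vop_adjoint]
  ext f ξ
  simp only [ContinuousLinearMap.comp_apply, vop_apply, sub_neg_eq_add, sub_add_cancel]
  by_cases h1 : ξ ∈ Zlt N <;> by_cases h2 : ξ - η ∈ Zlt N <;> simp [h1, h2]

end Heis
end
end

section
/- Let 𝓒₁, 𝓒₂ be nuclear C*-algebras with closed two-sided ideals 𝓘₁ ⊆ 𝓒₁ and 𝓘₂ ⊆ 𝓒₂, and let π_j : 𝓒_j → 𝓒_j/𝓘_j be the quotient maps. Then the map π̄ : 𝓒₁ ⊗ 𝓒₂ → ((𝓒₁/𝓘₁) ⊗ 𝓒₂) ⊕ (𝓒₁ ⊗ (𝓒₂/𝓘₂)) given by A ↦ ((π₁⊗1)(A), (1⊗π₂)(A)) is a *-homomorphism with kernel 𝓘₁ ⊗ 𝓘₂ (minimal tensor products throughout). -/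
open TensorProduct

noncomputable section

universe u

/-- A realization of a C*-tensor norm on the algebraic tensor product `A ⊗ B` of two normed
*-algebras: an injective algebra homomorphism into a C*-algebra `T` which is a
*-homomorphism on elementary tensors and satisfies the cross-norm identity
`‖a ⊗ b‖ = ‖a‖ ‖b‖`. -/
def IsTensorCStarRep {A B T : Type u}
    [NormedRing A] [StarRing A] [NormedAlgebra ℂ A] [StarModule ℂ A]
    [NormedRing B] [StarRing B] [NormedAlgebra ℂ B] [StarModule ℂ B]
    [NormedRing T] [StarRing T] [CStarRing T] [NormedAlgebra ℂ T] [StarModule ℂ T]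
    [CompleteSpace T]
    (ι : A ⊗[ℂ] B →ₐ[ℂ] T) : Prop :=
  Function.Injective ι ∧
  (∀ (a : A) (b : B), star (ι (a ⊗ₜ[ℂ] b)) = ι (star a ⊗ₜ[ℂ] star b)) ∧
  (∀ (a : A) (b : B), ‖ι (a ⊗ₜ[ℂ] b)‖ = ‖a‖ * ‖b‖)

/-- A realization `ι : A ⊗ B → T` of the *minimal* (spatial) C*-tensor product of `A` and
`B`: a C*-tensor norm realization with dense range which is dominated by every other
C*-tensor norm realization. -/
def IsMinimalTensorRep {A B T : Type u}
    [NormedRing A] [StarRing A] [NormedAlgebra ℂ A] [StarModule ℂ A]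
    [NormedRing B] [StarRing B] [NormedAlgebra ℂ B] [StarModule ℂ B]
    [NormedRing T] [StarRing T] [CStarRing T] [NormedAlgebra ℂ T] [StarModule ℂ T]
    [CompleteSpace T]
    (ι : A ⊗[ℂ] B →ₐ[ℂ] T) : Prop :=
  IsTensorCStarRep ι ∧ DenseRange ι ∧
  ∀ (T' : Type u) [NormedRing T'] [StarRing T'] [CStarRing T'] [NormedAlgebra ℂ T']
    [StarModule ℂ T'] [CompleteSpace T'] (j : A ⊗[ℂ] B →ₐ[ℂ] T'),
    IsTensorCStarRep j → ∀ x : A ⊗[ℂ] B, ‖ι x‖ ≤ ‖j x‖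

/-- A C*-algebra `A` is *nuclear* if for every C*-algebra `B` there is a unique C*-norm on
the algebraic tensor product `A ⊗ B`, i.e. any two C*-tensor norm realizations of `A ⊗ B`
are isometric. -/
def IsNuclearCStarAlgebra (A : Type u)
    [NormedRing A] [StarRing A] [NormedAlgebra ℂ A] [StarModule ℂ A] : Prop :=
  ∀ (B T₁ T₂ : Type u)
    [NormedRing B] [StarRing B] [NormedAlgebra ℂ B] [StarModule ℂ B]
    [NormedRing T₁] [StarRing T₁] [CStarRing T₁] [NormedAlgebra ℂ T₁] [StarModule ℂ T₁]
    [CompleteSpace T₁]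
    [NormedRing T₂] [StarRing T₂] [CStarRing T₂] [NormedAlgebra ℂ T₂] [StarModule ℂ T₂]
    [CompleteSpace T₂]
    (ι₁ : A ⊗[ℂ] B →ₐ[ℂ] T₁) (ι₂ : A ⊗[ℂ] B →ₐ[ℂ] T₂),
    IsTensorCStarRep ι₁ → IsTensorCStarRep ι₂ → ∀ x : A ⊗[ℂ] B, ‖ι₁ x‖ = ‖ι₂ x‖





open scoped Finset

lemma cstar_approx_unit {A : Type u} [CStarAlgebra A] {n : ℕ} (a : Fin n → A) {ε : ℝ}
    (hε : 0 < ε) :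
    ∃ e : A, IsSelfAdjoint e ∧ ‖e‖ ≤ 1 ∧ ‖1 - e‖ ≤ 1 ∧
      (∃ u : A, e = (∑ i, (a i * star (a i) + star (a i) * a i)) * u) ∧
      (∀ i, ‖e * a i - a i‖ ≤ ε) ∧ (∀ i, ‖a i * e - a i‖ ≤ ε) := by
  letI := CStarAlgebra.spectralOrder A
  haveI := CStarAlgebra.spectralOrderedRing A
  set h : A := ∑ i, (a i * star (a i) + star (a i) * a i) with hh_def
  have hh : (0 : A) ≤ h :=
    Finset.sum_nonneg fun i _ => add_nonneg (mul_star_self_nonneg _) (star_mul_self_nonneg _)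
  have hsa : IsSelfAdjoint h := .of_nonneg hh
  have hspec : ∀ t ∈ spectrum ℝ h, 0 ≤ t := fun t ht => spectrum_nonneg_of_nonneg hh ht
  set δ : ℝ := ε ^ 2 with hδ_def
  have hδ : 0 < δ := by positivity
  set g : ℝ → ℝ := fun t => (max t 0 + δ)⁻¹ with hg_def
  have hgc : Continuous g := Continuous.inv₀ (by fun_prop) fun t => by positivity
  set F : ℝ → ℝ := fun t => t * g t with hF_def
  set e : A := cfc F h with he_def
  have he_eq : e = h * cfc g h := by
    conv_lhs => rw [he_def]
    rw [show F = fun t => id t * g t from rfl,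
      cfc_mul id g h (by fun_prop) (by fun_prop), cfc_id (R := ℝ) h]
  have hFbound : ∀ t ∈ spectrum ℝ h, ‖F t‖ ≤ 1 := by
    intro t ht
    have ht0 := hspec t ht
    simp only [hF_def, hg_def, max_eq_left ht0, Real.norm_eq_abs]
    rw [abs_of_nonneg (by positivity), mul_inv_le_iff₀ (by positivity)]
    linarith
  have he_norm : ‖e‖ ≤ 1 := he_def ▸ norm_cfc_le zero_le_one hFbound
  have hone_sub : (1 : A) - e = cfc (fun t => 1 - F t) h := by
    rw [he_def, cfc_sub _ _ h (by fun_prop) (by fun_prop), cfc_const_one (R := ℝ) h]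
  have hFt' : ∀ t ∈ spectrum ℝ h, 1 - F t = δ / (t + δ) := by
    intro t ht
    have ht0 := hspec t ht
    simp only [hF_def, hg_def, max_eq_left ht0]
    field_simp
    ring
  have hone_sub_norm : ‖(1:A) - e‖ ≤ 1 := by
    rw [hone_sub]
    refine norm_cfc_le zero_le_one fun t ht => ?_
    have ht0 := hspec t ht
    rw [hFt' t ht, Real.norm_eq_abs, abs_of_nonneg (by positivity)]
    rw [div_le_one (by positivity)]; linarith
  have hesa : IsSelfAdjoint e := he_def ▸ IsSelfAdjoint.cfc
  have hcsa : IsSelfAdjoint ((1:A) - e) := IsSelfAdjoint.sub (IsSelfAdjoint.one A) hesa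
  have hkey : ‖((1:A) - e) * h * ((1:A) - e)‖ ≤ δ / 4 := by
    have hrw : cfc (fun t => (1 - F t) * t * (1 - F t)) h = ((1:A) - e) * h * ((1:A) - e) := by
      rw [cfc_mul (fun t => (1 - F t) * t) (fun t => 1 - F t) h (by fun_prop) (by fun_prop),
        cfc_mul (fun t => 1 - F t) (fun t => t) h (by fun_prop) (by fun_prop),
        cfc_id' (R := ℝ) h, ← hone_sub]
    rw [← hrw]
    refine norm_cfc_le (by positivity) fun t ht => ?_
    have ht0 := hspec t ht
    rw [hFt' t ht, Real.norm_eq_abs]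
    have harw : δ / (t + δ) * t * (δ / (t + δ)) = δ * δ * t / ((t + δ) * (t + δ)) := by
      field_simp
    rw [harw, abs_of_nonneg (by positivity), div_le_div_iff₀ (by positivity) (by norm_num)]
    nlinarith [sq_nonneg (t - δ)]
  have hterm : ∀ i : Fin n, a i * star (a i) ≤ h ∧ star (a i) * a i ≤ h := by
    intro i
    have hsum : a i * star (a i) + star (a i) * a i ≤ h :=
      Finset.single_le_sum (f := fun j => a j * star (a j) + star (a j) * a j)
        (fun j _ => add_nonneg (mul_star_self_nonneg _) (star_mul_self_nonneg _))
        (Finset.mem_univ i)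
    exact ⟨le_trans (le_add_of_nonneg_right (star_mul_self_nonneg _)) hsum,
      le_trans (le_add_of_nonneg_left (mul_star_self_nonneg _)) hsum⟩
  refine ⟨e, hesa, he_norm, hone_sub_norm, ⟨cfc g h, he_eq⟩, fun i => ?_, fun i => ?_⟩
  · -- ‖e * a i - a i‖ ≤ ε
    have hx : e * a i - a i = -(((1:A) - e) * a i) := by noncomm_ring
    rw [hx, norm_neg]
    have hsq : ‖((1:A) - e) * a i‖ * ‖((1:A) - e) * a i‖ ≤ δ / 4 := by
      rw [← CStarRing.norm_self_mul_star]
      have hstar : star (((1:A) - e) * a i) = star (a i) * ((1:A) - e) := by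
        rw [star_mul, hcsa.star_eq]
      rw [hstar, show ((1:A) - e) * a i * (star (a i) * ((1:A) - e)) = ((1:A) - e) * (a i * star (a i)) * ((1:A) - e) by noncomm_ring]
      calc ‖((1:A) - e) * (a i * star (a i)) * ((1:A) - e)‖ ≤ ‖((1:A) - e) * h * ((1:A) - e)‖ := by
            have hle := star_left_conjugate_le_conjugate (hterm i).1 ((1:A) - e)
            rw [hcsa.star_eq] at hle
            exact CStarAlgebra.norm_le_norm_of_nonneg_of_le
              (by simpa [hcsa.star_eq] using star_left_conjugate_nonneg (mul_star_self_nonneg (a i)) ((1:A) - e)) hle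
        _ ≤ δ / 4 := hkey
    nlinarith [norm_nonneg (((1:A) - e) * a i)]
  · have hx : a i * e - a i = -(a i * ((1:A) - e)) := by noncomm_ring
    rw [hx, norm_neg]
    have hsq : ‖a i * ((1:A) - e)‖ * ‖a i * ((1:A) - e)‖ ≤ δ / 4 := by
      rw [← CStarRing.norm_star_mul_self]
      have hstar : star (a i * ((1:A) - e)) = ((1:A) - e) * star (a i) := by
        rw [star_mul, hcsa.star_eq]
      rw [hstar, show ((1:A) - e) * star (a i) * (a i * ((1:A) - e)) = ((1:A) - e) * (star (a i) * a i) * ((1:A) - e) by noncomm_ring]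
      calc ‖((1:A) - e) * (star (a i) * a i) * ((1:A) - e)‖ ≤ ‖((1:A) - e) * h * ((1:A) - e)‖ := by
            have hle := star_left_conjugate_le_conjugate (hterm i).2 ((1:A) - e)
            rw [hcsa.star_eq] at hle
            exact CStarAlgebra.norm_le_norm_of_nonneg_of_le
              (by simpa [hcsa.star_eq] using star_left_conjugate_nonneg (star_mul_self_nonneg (a i)) ((1:A) - e)) hle
        _ ≤ δ / 4 := hkey
    nlinarith [norm_nonneg (a i * ((1:A) - e))]


structure CStarIdealData (A : Type u) [CStarAlgebra A] : Type u where
  carrier : Submodule ℂ A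
  mul_mem_left' : ∀ (x : A) {k : A}, k ∈ carrier → x * k ∈ carrier
  mul_mem_right' : ∀ {k : A} (x : A), k ∈ carrier → k * x ∈ carrier
  star_mem' : ∀ {k : A}, k ∈ carrier → star k ∈ carrier
  isClosed' : IsClosed (carrier : Set A)

namespace CStarIdealData

variable {A : Type u} [CStarAlgebra A] (J : CStarIdealData A)

def Q (J : CStarIdealData A) : Type u := A ⧸ J.carrier

noncomputable instance : NormedAddCommGroup J.Q :=
  @Submodule.Quotient.normedAddCommGroup _ _ _ _ _ J.carrier J.isClosed'

instance : Module ℂ J.Q := inferInstanceAs (Module ℂ (A ⧸ J.carrier))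

noncomputable instance : NormedSpace ℂ J.Q := inferInstanceAs (NormedSpace ℂ (A ⧸ J.carrier))

instance : CompleteSpace J.Q := inferInstanceAs (CompleteSpace (A ⧸ J.carrier))

def qmk (a : A) : J.Q := Submodule.Quotient.mk a

lemma mk_surjective : Function.Surjective J.qmk := Submodule.Quotient.mk_surjective _

lemma mk_eq_mk_iff {a b : A} : J.qmk a = J.qmk b ↔ a - b ∈ J.carrier := Submodule.Quotient.eq _

lemma mk_eq_zero_iff {a : A} : J.qmk a = 0 ↔ a ∈ J.carrier := Submodule.Quotient.mk_eq_zero _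

lemma mk_add (a b : A) : J.qmk (a + b) = J.qmk a + J.qmk b := rfl
lemma mk_sub (a b : A) : J.qmk (a - b) = J.qmk a - J.qmk b := rfl
lemma mk_smul (c : ℂ) (a : A) : J.qmk (c • a) = c • J.qmk a := rfl
lemma mk_zero : J.qmk 0 = 0 := rfl

lemma norm_mk_le (a : A) : ‖J.qmk a‖ ≤ ‖a‖ := Submodule.Quotient.norm_mk_le _ a

lemma norm_mk_lt (x : J.Q) {ε : ℝ} (hε : 0 < ε) : ∃ m : A, J.qmk m = x ∧ ‖m‖ < ‖x‖ + ε :=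
  Submodule.Quotient.norm_mk_lt x hε

noncomputable instance : Mul J.Q :=
  ⟨fun x y => Quotient.liftOn₂' x y (fun a b => J.qmk (a * b)) fun a₁ b₁ a₂ b₂ h₁ h₂ => by
    have h₁' : a₁ - a₂ ∈ J.carrier := (Submodule.quotientRel_def J.carrier).mp h₁
    have h₂' : b₁ - b₂ ∈ J.carrier := (Submodule.quotientRel_def J.carrier).mp h₂
    rw [mk_eq_mk_iff]
    have : a₁ * b₁ - a₂ * b₂ = (a₁ - a₂) * b₁ + a₂ * (b₁ - b₂) := by noncomm_ring
    rw [this]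
    exact add_mem (J.mul_mem_right' b₁ h₁') (J.mul_mem_left' a₂ h₂')⟩

lemma mk_mul (a b : A) : J.qmk (a * b) = J.qmk a * J.qmk b := rfl

noncomputable instance : One J.Q := ⟨J.qmk 1⟩
noncomputable instance : NatCast J.Q := ⟨fun n => J.qmk n⟩
noncomputable instance : IntCast J.Q := ⟨fun n => J.qmk n⟩
noncomputable instance : Pow J.Q ℕ := ⟨fun x n => npowRec n x⟩

lemma mk_one : J.qmk 1 = 1 := rfl

noncomputable instance : Ring J.Q := by
  refine Function.Surjective.ring J.qmk J.mk_surjective rfl rfl (fun _ _ => rfl) (fun _ _ => rfl)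
    (fun _ => rfl) (fun _ _ => rfl)
    (fun n x => (J.carrier.mkQ.toAddMonoidHom.map_nsmul n x : _))
    (fun n x => (J.carrier.mkQ.toAddMonoidHom.map_zsmul n x : _))
    (fun x n => ?_) (fun _ => rfl) (fun _ => rfl)
  · induction n with
    | zero => rw [pow_zero]; rfl
    | succ n ih =>
      rw [pow_succ]
      show J.qmk (x ^ n * x) = npowRec (n + 1) (J.qmk x)
      rw [mk_mul, ih]; rfl

noncomputable instance : StarRing J.Q where
  star x := Quotient.liftOn' x (fun a => J.qmk (star a)) fun a b h => by
    have h' : a - b ∈ J.carrier := (Submodule.quotientRel_def J.carrier).mp h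
    rw [mk_eq_mk_iff, ← star_sub]
    exact J.star_mem' h'
  star_involutive x := Quotient.inductionOn' x fun a => by
    show J.qmk (star (star a)) = J.qmk a
    rw [star_star]
  star_mul x y := Quotient.inductionOn₂' x y fun a b => by
    show J.qmk (star (a * b)) = J.qmk (star b) * J.qmk (star a)
    rw [star_mul]; rfl
  star_add x y := Quotient.inductionOn₂' x y fun a b => by
    show J.qmk (star (a + b)) = J.qmk (star a) + J.qmk (star b)
    rw [star_add]; rfl

lemma mk_star (a : A) : J.qmk (star a) = star (J.qmk a) := rfl

instance : StarModule ℂ J.Q where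
  star_smul c x := Quotient.inductionOn' x fun a => by
    show J.qmk (star (c • a)) = star c • J.qmk (star a)
    rw [star_smul]; rfl

noncomputable instance : Algebra ℂ J.Q :=
  @Algebra.ofModule ℂ J.Q _ _ (CStarIdealData.instModuleComplexQ J)
    (fun c x y => Quotient.inductionOn₂' x y fun a b => by
      show J.qmk ((c • a) * b) = c • J.qmk (a * b)
      rw [smul_mul_assoc]; rfl)
    (fun c x y => Quotient.inductionOn₂' x y fun a b => by
      show J.qmk (a * (c • b)) = c • J.qmk (a * b)
      rw [mul_smul_comm]; rfl)

noncomputable instance : NormedRing J.Q :=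
  { (inferInstance : Ring J.Q), (inferInstance : NormedAddCommGroup J.Q) with
    norm_mul_le := by
      intro x y
      have key : ∀ δ : ℝ, 0 < δ → ‖x * y‖ ≤ (‖x‖ + δ) * (‖y‖ + δ) := by
        intro δ hδ
        obtain ⟨a, rfl, ha⟩ := J.norm_mk_lt x hδ
        obtain ⟨b, rfl, hb⟩ := J.norm_mk_lt y hδ
        calc ‖J.qmk a * J.qmk b‖ = ‖J.qmk (a * b)‖ := by rw [mk_mul]
          _ ≤ ‖a * b‖ := J.norm_mk_le _
          _ ≤ ‖a‖ * ‖b‖ := norm_mul_le a b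
          _ ≤ (‖J.qmk a‖ + δ) * (‖J.qmk b‖ + δ) := by
              have h0a : (0:ℝ) ≤ ‖a‖ := norm_nonneg a
              have h0b : (0:ℝ) ≤ ‖b‖ := norm_nonneg b
              exact mul_le_mul ha.le hb.le h0b (by positivity)
      have lim : Filter.Tendsto (fun δ : ℝ => (‖x‖ + δ) * (‖y‖ + δ)) (nhdsWithin 0 (Set.Ioi 0))
          (nhds (‖x‖ * ‖y‖)) := by
        have : Filter.Tendsto (fun δ : ℝ => (‖x‖ + δ) * (‖y‖ + δ)) (nhds 0)
            (nhds ((‖x‖ + 0) * (‖y‖ + 0))) := by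
          exact Filter.Tendsto.mul (tendsto_const_nhds.add Filter.tendsto_id)
            (tendsto_const_nhds.add Filter.tendsto_id)
        simpa using this.mono_left nhdsWithin_le_nhds
      exact ge_of_tendsto lim (by
        filter_upwards [self_mem_nhdsWithin] with δ hδ using key δ hδ) }

noncomputable instance : NormedAlgebra ℂ J.Q :=
  { (inferInstance : Algebra ℂ J.Q) with
    norm_smul_le := fun c x => (CStarIdealData.instNormedSpaceComplexQ J).norm_smul_le c x }

noncomputable instance : CStarRing J.Q where
  norm_mul_self_le x := by
    obtain ⟨a, rfl⟩ := J.mk_surjective x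
    have hsmul : star (J.qmk a) * J.qmk a = J.qmk (star a * a) := rfl
    rw [hsmul]
    have key : ∀ ε > (0:ℝ), ‖J.qmk a‖ * ‖J.qmk a‖ ≤ ‖J.qmk (star a * a)‖ + ε := by
      intro ε hε
      obtain ⟨m, hm, hmlt⟩ := J.norm_mk_lt (J.qmk (star a * a)) (half_pos hε)
      have hkJ : m - star a * a ∈ J.carrier := J.mk_eq_mk_iff.mp hm
      set k : A := m - star a * a with hk_def
      obtain ⟨e, hesa, he1, he2, ⟨u, heu⟩, _, hright⟩ := cstar_approx_unit ![k] (half_pos hε)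
      have heJ : e ∈ J.carrier := by
        rw [heu]
        refine J.mul_mem_right' u ?_
        have : ∑ i, (![k] i * star (![k] i) + star (![k] i) * ![k] i)
            = k * star k + star k * k := by simp [Fin.sum_univ_one]
        rw [this]
        exact add_mem (J.mul_mem_right' (star k) hkJ) (J.mul_mem_left' (star k) hkJ)
      have h1 : J.qmk a = J.qmk (a - a * e) := by
        rw [J.mk_eq_mk_iff]
        have : a - (a - a * e) = a * e := by noncomm_ring
        rw [this]
        exact J.mul_mem_left' a heJ
      have h2 : ‖J.qmk a‖ ≤ ‖a - a * e‖ := h1 ▸ J.norm_mk_le _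
      have h3 : ‖a - a * e‖ * ‖a - a * e‖ = ‖(1 - e) * (star a * a) * (1 - e)‖ := by
        rw [← CStarRing.norm_star_mul_self]
        congr 1
        have hfa : a - a * e = a * (1 - e) := by noncomm_ring
        rw [hfa, star_mul, ((IsSelfAdjoint.one A).sub hesa).star_eq]
        noncomm_ring
      have h4 : ‖(1 - e) * (star a * a) * (1 - e)‖ ≤ ‖J.qmk (star a * a)‖ + ε := by
        calc ‖(1 - e) * (star a * a) * (1 - e)‖
            = ‖(1 - e) * ((star a * a) * (1 - e))‖ := by rw [mul_assoc]
          _ ≤ ‖(1:A) - e‖ * ‖(star a * a) * (1 - e)‖ := norm_mul_le _ _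
          _ ≤ ‖(star a * a) * (1 - e)‖ := by
              have := norm_nonneg ((star a * a) * (1 - e))
              nlinarith
          _ ≤ ‖m * (1 - e)‖ + ‖k * (1 - e)‖ := by
              have : (star a * a) * (1 - e) = m * (1 - e) - k * (1 - e) := by
                rw [hk_def]; noncomm_ring
              rw [this]; exact norm_sub_le _ _
          _ ≤ ‖J.qmk (star a * a)‖ + ε := by
              have hm1 : ‖m * (1 - e)‖ ≤ ‖m‖ := by
                calc ‖m * (1 - e)‖ ≤ ‖m‖ * ‖(1:A) - e‖ := norm_mul_le _ _
                  _ ≤ ‖m‖ := by have := norm_nonneg m; nlinarith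
              have hk1 : ‖k * (1 - e)‖ ≤ ε / 2 := by
                have : k * (1 - e) = -(k * e - k) := by noncomm_ring
                rw [this, norm_neg]
                simpa using hright 0
              linarith
      calc ‖J.qmk a‖ * ‖J.qmk a‖ ≤ ‖a - a * e‖ * ‖a - a * e‖ :=
            mul_self_le_mul_self (norm_nonneg _) h2
        _ = ‖(1 - e) * (star a * a) * (1 - e)‖ := h3
        _ ≤ ‖J.qmk (star a * a)‖ + ε := h4
    exact le_of_forall_pos_le_add key

noncomputable instance : CStarAlgebra J.Q where

/-- The quotient map as a star algebra homomorphism. -/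
noncomputable def mkHom : A →⋆ₐ[ℂ] J.Q where
  toFun := J.qmk
  map_one' := rfl
  map_mul' _ _ := rfl
  map_zero' := rfl
  map_add' _ _ := rfl
  map_star' _ := rfl
  commutes' c := by
    show J.qmk (algebraMap ℂ A c) = algebraMap ℂ J.Q c
    rw [Algebra.algebraMap_eq_smul_one, Algebra.algebraMap_eq_smul_one (A := J.Q)]
    rw [← J.mk_one, ← J.mk_smul]

lemma continuous_qmk : Continuous J.qmk := by
  have : LipschitzWith 1 J.qmk := by
    refine LipschitzWith.of_dist_le_mul fun a b => ?_
    rw [dist_eq_norm, dist_eq_norm, ← J.mk_sub]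
    simpa using J.norm_mk_le (a - b)
  exact this.continuous

end CStarIdealData

namespace CStarIdealData

variable {A : Type u} [CStarAlgebra A] (J : CStarIdealData A)

/-- Lift an algebra homomorphism vanishing on the ideal to the quotient. -/
noncomputable def lift {B : Type v} [Ring B] [Algebra ℂ B] (g : A →ₐ[ℂ] B)
    (hg : ∀ k ∈ J.carrier, g k = 0) : J.Q →ₐ[ℂ] B where
  toFun x := Quotient.liftOn' x g fun a b h => by
    have h' : a - b ∈ J.carrier := (Submodule.quotientRel_def J.carrier).mp h
    have := hg _ h'
    rw [map_sub, sub_eq_zero] at this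
    exact this
  map_one' := map_one g
  map_mul' x y := Quotient.inductionOn₂' x y fun a b => map_mul g a b
  map_zero' := map_zero g
  map_add' x y := Quotient.inductionOn₂' x y fun a b => map_add g a b
  commutes' c := by
    have h : (algebraMap ℂ J.Q c) = J.qmk (algebraMap ℂ A c) := by
      rw [Algebra.algebraMap_eq_smul_one, Algebra.algebraMap_eq_smul_one (A := A),
        ← J.mk_one, ← J.mk_smul]
    rw [h]
    exact g.commutes c

@[simp] lemma lift_qmk {B : Type v} [Ring B] [Algebra ℂ B] (g : A →ₐ[ℂ] B)
    (hg : ∀ k ∈ J.carrier, g k = 0) (a : A) : J.lift g hg (J.qmk a) = g a := rfl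

end CStarIdealData



section OneSided

/-- Transfer of `IsTensorCStarRep` across the commutor. -/
lemma IsTensorCStarRep.comm {A B T : Type u}
    [NormedRing A] [StarRing A] [NormedAlgebra ℂ A] [StarModule ℂ A]
    [NormedRing B] [StarRing B] [NormedAlgebra ℂ B] [StarModule ℂ B]
    [NormedRing T] [StarRing T] [CStarRing T] [NormedAlgebra ℂ T] [StarModule ℂ T]
    [CompleteSpace T]
    {ι : A ⊗[ℂ] B →ₐ[ℂ] T} (h : IsTensorCStarRep ι) :
    IsTensorCStarRep (ι.comp (Algebra.TensorProduct.comm ℂ B A).toAlgHom) := by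
  obtain ⟨hinj, hstar, hnorm⟩ := h
  refine ⟨hinj.comp (Algebra.TensorProduct.comm ℂ B A).injective, fun b a => ?_, fun b a => ?_⟩
  · simpa using hstar a b
  · simpa [mul_comm] using hnorm a b

/-- One-sided kernel computation: the kernel of `π ⊗ 1` is the closed span of the elementary
tensors `a ⊗ b` with `π a = 0`. -/
lemma ker_one_sided {𝓒₁ 𝓒₂ Q₁ T T₁ : Type u}
    [NormedRing 𝓒₁] [StarRing 𝓒₁] [CStarRing 𝓒₁] [NormedAlgebra ℂ 𝓒₁] [StarModule ℂ 𝓒₁]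
    [CompleteSpace 𝓒₁]
    [NormedRing 𝓒₂] [StarRing 𝓒₂] [CStarRing 𝓒₂] [NormedAlgebra ℂ 𝓒₂] [StarModule ℂ 𝓒₂]
    [CompleteSpace 𝓒₂]
    [NormedRing Q₁] [StarRing Q₁] [CStarRing Q₁] [NormedAlgebra ℂ Q₁] [StarModule ℂ Q₁]
    [CompleteSpace Q₁]
    [NormedRing T] [StarRing T] [CStarRing T] [NormedAlgebra ℂ T] [StarModule ℂ T]
    [CompleteSpace T]
    [NormedRing T₁] [StarRing T₁] [CStarRing T₁] [NormedAlgebra ℂ T₁] [StarModule ℂ T₁]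
    [CompleteSpace T₁]
    (hnuc : IsNuclearCStarAlgebra 𝓒₂)
    (π₁ : 𝓒₁ →⋆ₐ[ℂ] Q₁) (hπ₁s : Function.Surjective π₁) (hπ₁c : Continuous π₁)
    (ι : 𝓒₁ ⊗[ℂ] 𝓒₂ →ₐ[ℂ] T) (hι : IsTensorCStarRep ι) (hιd : DenseRange ι)
    (ι₁ : Q₁ ⊗[ℂ] 𝓒₂ →ₐ[ℂ] T₁) (hι₁ : IsTensorCStarRep ι₁)
    (p₁ : T →⋆ₐ[ℂ] T₁)
    (hp₁ : ∀ x : 𝓒₁ ⊗[ℂ] 𝓒₂,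
      p₁ (ι x) = ι₁ (Algebra.TensorProduct.map π₁.toAlgHom (AlgHom.id ℂ 𝓒₂) x)) :
    ∀ t : T, p₁ t = 0 ↔
      t ∈ closure ((Submodule.span ℂ
        {t : T | ∃ (a : 𝓒₁) (b : 𝓒₂), π₁ a = 0 ∧ t = ι (a ⊗ₜ[ℂ] b)} : Submodule ℂ T) : Set T) := by
  letI : CStarAlgebra 𝓒₁ :=
    { ‹NormedRing 𝓒₁›, ‹StarRing 𝓒₁›, ‹CStarRing 𝓒₁›, ‹NormedAlgebra ℂ 𝓒₁›, ‹StarModule ℂ 𝓒₁›,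
      ‹CompleteSpace 𝓒₁› with }
  letI : CStarAlgebra Q₁ :=
    { ‹NormedRing Q₁›, ‹StarRing Q₁›, ‹CStarRing Q₁›, ‹NormedAlgebra ℂ Q₁›, ‹StarModule ℂ Q₁›,
      ‹CompleteSpace Q₁› with }
  letI : CStarAlgebra T :=
    { ‹NormedRing T›, ‹StarRing T›, ‹CStarRing T›, ‹NormedAlgebra ℂ T›, ‹StarModule ℂ T›,
      ‹CompleteSpace T› with }
  letI : CStarAlgebra T₁ :=
    { ‹NormedRing T₁›, ‹StarRing T₁›, ‹CStarRing T₁›, ‹NormedAlgebra ℂ T₁›, ‹StarModule ℂ T₁›,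
      ‹CompleteSpace T₁› with }
  obtain ⟨hι_inj, hι_star, hι_norm⟩ := hι
  obtain ⟨hι₁_inj, hι₁_star, hι₁_norm⟩ := hι₁
  set S₁ : Set T := {t : T | ∃ (a : 𝓒₁) (b : 𝓒₂), π₁ a = 0 ∧ t = ι (a ⊗ₜ[ℂ] b)} with hS₁_def
  -- `p₁` is contractive and continuous
  have hp₁_le : ∀ t : T, ‖p₁ t‖ ≤ ‖t‖ := fun t => NonUnitalStarAlgHom.norm_apply_le p₁ t
  have hp₁_cont : Continuous p₁ := by
    have : LipschitzWith 1 p₁ := LipschitzWith.of_dist_le_mul fun a b => by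
      rw [dist_eq_norm, dist_eq_norm, ← map_sub]
      simpa using hp₁_le (a - b)
    exact this.continuous
  -- `p₁` vanishes on the closed span of `S₁`
  have hspan_le : Submodule.span ℂ S₁ ≤ LinearMap.ker (p₁.toAlgHom.toLinearMap) := by
    rw [Submodule.span_le]
    rintro t ⟨a, b, ha, rfl⟩
    simp only [SetLike.mem_coe, LinearMap.mem_ker]
    show p₁ (ι (a ⊗ₜ[ℂ] b)) = 0
    rw [hp₁ (a ⊗ₜ[ℂ] b)]
    have : Algebra.TensorProduct.map π₁.toAlgHom (AlgHom.id ℂ 𝓒₂) (a ⊗ₜ[ℂ] b)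
        = (0 : Q₁) ⊗ₜ[ℂ] b := by
      rw [Algebra.TensorProduct.map_tmul]
      simp [ha]
    rw [this, TensorProduct.zero_tmul, map_zero]
  have hp₁_vanish : ∀ t ∈ closure ((Submodule.span ℂ S₁ : Submodule ℂ T) : Set T), p₁ t = 0 := by
    intro t ht
    have hclosed : IsClosed {t : T | p₁ t = 0} :=
      isClosed_eq hp₁_cont continuous_const
    have : closure ((Submodule.span ℂ S₁ : Submodule ℂ T) : Set T) ⊆ {t : T | p₁ t = 0} := by
      refine closure_minimal ?_ hclosed
      intro s hs
      exact hspan_le hs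
    exact this ht
  -- The ideal 𝓘₁ = ker π₁ in 𝓒₁
  set I₁ : CStarIdealData 𝓒₁ :=
    { carrier := LinearMap.ker (π₁.toAlgHom.toLinearMap)
      mul_mem_left' := fun x {k} hk => by
        simp only [LinearMap.mem_ker] at hk ⊢
        show π₁ (x * k) = 0
        rw [map_mul]
        simp only [show π₁ k = 0 from hk, mul_zero]
      mul_mem_right' := fun {k} x hk => by
        simp only [LinearMap.mem_ker] at hk ⊢
        show π₁ (k * x) = 0
        rw [map_mul]
        simp only [show π₁ k = 0 from hk, zero_mul]
      star_mem' := fun {k} hk => by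
        simp only [LinearMap.mem_ker] at hk ⊢
        show π₁ (star k) = 0
        rw [map_star]
        simp only [show π₁ k = 0 from hk, star_zero]
      isClosed' := by
        have : (LinearMap.ker (π₁.toAlgHom.toLinearMap) : Set 𝓒₁) = π₁ ⁻¹' {0} := by
          ext x; simp [LinearMap.mem_ker]
        rw [this]
        exact IsClosed.preimage hπ₁c isClosed_singleton } with hI₁_def
  have hI₁_mem : ∀ a : 𝓒₁, a ∈ I₁.carrier ↔ π₁ a = 0 := fun a => by
    simp [hI₁_def, LinearMap.mem_ker]

  -- norm on Q₁ equals the quotient norm of 𝓒₁ ⧸ 𝓘₁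
  let πb : I₁.Q →ₐ[ℂ] Q₁ := I₁.lift π₁.toAlgHom (fun k hk => (hI₁_mem k).mp hk)
  let πs : I₁.Q →⋆ₐ[ℂ] Q₁ :=
    { πb with
      map_star' := fun x => Quotient.inductionOn' x fun a => by
        show π₁ (star a) = star (π₁ a)
        exact map_star π₁ a }
  have hπs_eval : ∀ a : 𝓒₁, πs (I₁.qmk a) = π₁ a := fun a => rfl
  have hπs_inj : Function.Injective πs := by
    rw [injective_iff_map_eq_zero]
    intro x
    refine Quotient.inductionOn' x fun a ha => ?_
    have ha' : π₁ a = 0 := by rw [← hπs_eval a]; exact ha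
    exact (I₁.mk_eq_zero_iff).mpr ((hI₁_mem a).mpr ha')
  have hq_norm : ∀ a : 𝓒₁, ‖I₁.qmk a‖ = ‖π₁ a‖ := fun a =>
    (NonUnitalStarAlgHom.norm_map πs hπs_inj (I₁.qmk a)).symm
  have hdist : ∀ a : 𝓒₁, ∀ δ > (0:ℝ), ∃ k : 𝓒₁, π₁ k = 0 ∧ ‖a + k‖ < ‖π₁ a‖ + δ := by
    intro a δ hδ
    obtain ⟨m, hm, hmlt⟩ := I₁.norm_mk_lt (I₁.qmk a) hδ
    refine ⟨m - a, ?_, ?_⟩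
    · exact (hI₁_mem _).mp ((I₁.mk_eq_mk_iff).mp hm)
    · rw [hq_norm] at hmlt
      simpa using hmlt
  -- the ideal K₁ = closure (span S₁) in T
  have hgen_left : ∀ (y : 𝓒₁ ⊗[ℂ] 𝓒₂) (a : 𝓒₁) (b : 𝓒₂), π₁ a = 0 →
      ι y * ι (a ⊗ₜ[ℂ] b) ∈ Submodule.span ℂ S₁ := by
    intro y a b ha
    rw [← map_mul]
    induction y using TensorProduct.induction_on with
    | zero => rw [zero_mul, map_zero]; exact Submodule.zero_mem _
    | tmul c d =>
        rw [Algebra.TensorProduct.tmul_mul_tmul]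
        refine Submodule.subset_span ⟨c * a, d * b, ?_, rfl⟩
        rw [map_mul, ha, mul_zero]
    | add y₁ y₂ h₁ h₂ =>
        rw [add_mul, map_add]
        exact Submodule.add_mem _ h₁ h₂
  have hgen_right : ∀ (y : 𝓒₁ ⊗[ℂ] 𝓒₂) (a : 𝓒₁) (b : 𝓒₂), π₁ a = 0 →
      ι (a ⊗ₜ[ℂ] b) * ι y ∈ Submodule.span ℂ S₁ := by
    intro y a b ha
    rw [← map_mul]
    induction y using TensorProduct.induction_on with
    | zero => rw [mul_zero, map_zero]; exact Submodule.zero_mem _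
    | tmul c d =>
        rw [Algebra.TensorProduct.tmul_mul_tmul]
        refine Submodule.subset_span ⟨a * c, b * d, ?_, rfl⟩
        rw [map_mul, ha, zero_mul]
    | add y₁ y₂ h₁ h₂ =>
        rw [mul_add, map_add]
        exact Submodule.add_mem _ h₁ h₂
  have hspan_mul_left : ∀ (y : 𝓒₁ ⊗[ℂ] 𝓒₂) (k : T), k ∈ Submodule.span ℂ S₁ →
      ι y * k ∈ Submodule.span ℂ S₁ := by
    intro y k hk
    induction hk using Submodule.span_induction with
    | mem s hs => obtain ⟨a, b, ha, rfl⟩ := hs; exact hgen_left y a b ha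
    | zero => rw [mul_zero]; exact Submodule.zero_mem _
    | add k₁ k₂ _ _ h₁ h₂ => rw [mul_add]; exact Submodule.add_mem _ h₁ h₂
    | smul c k _ h => rw [mul_smul_comm]; exact Submodule.smul_mem _ c h
  have hspan_mul_right : ∀ (y : 𝓒₁ ⊗[ℂ] 𝓒₂) (k : T), k ∈ Submodule.span ℂ S₁ →
      k * ι y ∈ Submodule.span ℂ S₁ := by
    intro y k hk
    induction hk using Submodule.span_induction with
    | mem s hs => obtain ⟨a, b, ha, rfl⟩ := hs; exact hgen_right y a b ha
    | zero => rw [zero_mul]; exact Submodule.zero_mem _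
    | add k₁ k₂ _ _ h₁ h₂ => rw [add_mul]; exact Submodule.add_mem _ h₁ h₂
    | smul c k _ h => rw [smul_mul_assoc]; exact Submodule.smul_mem _ c h
  set P : Submodule ℂ T := (Submodule.span ℂ S₁).topologicalClosure with hP_def
  have hP_coe : (P : Set T) = closure ((Submodule.span ℂ S₁ : Submodule ℂ T) : Set T) := rfl
  have hP_closed : IsClosed (P : Set T) := Submodule.isClosed_topologicalClosure _
  have hmul_left_P : ∀ (x : T) (k : T), k ∈ P → x * k ∈ P := by
    -- first for k in the span, all x (by density); then for all k in the closure
    have step1 : ∀ (k : T), k ∈ Submodule.span ℂ S₁ → ∀ x : T, x * k ∈ P := by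
      intro k hk x
      have hclosed : IsClosed {x : T | x * k ∈ P} :=
        IsClosed.preimage (continuous_mul_right k) hP_closed
      have hsub : Set.range ι ⊆ {x : T | x * k ∈ P} := by
        rintro _ ⟨y, rfl⟩
        exact Submodule.le_topologicalClosure _ (hspan_mul_left y k hk)
      have := closure_minimal hsub hclosed
      exact this (hιd x)
    intro x k hk
    have hclosed : IsClosed {k : T | x * k ∈ P} :=
      IsClosed.preimage (continuous_mul_left x) hP_closed
    have hsub : ((Submodule.span ℂ S₁ : Submodule ℂ T) : Set T) ⊆ {k : T | x * k ∈ P} :=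
      fun k hk => step1 k hk x
    exact closure_minimal hsub hclosed hk
  have hmul_right_P : ∀ (x : T) (k : T), k ∈ P → k * x ∈ P := by
    have step1 : ∀ (k : T), k ∈ Submodule.span ℂ S₁ → ∀ x : T, k * x ∈ P := by
      intro k hk x
      have hclosed : IsClosed {x : T | k * x ∈ P} :=
        IsClosed.preimage (continuous_mul_left k) hP_closed
      have hsub : Set.range ι ⊆ {x : T | k * x ∈ P} := by
        rintro _ ⟨y, rfl⟩
        exact Submodule.le_topologicalClosure _ (hspan_mul_right y k hk)
      exact closure_minimal hsub hclosed (hιd x)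
    intro x k hk
    have hclosed : IsClosed {k : T | k * x ∈ P} :=
      IsClosed.preimage (continuous_mul_right x) hP_closed
    have hsub : ((Submodule.span ℂ S₁ : Submodule ℂ T) : Set T) ⊆ {k : T | k * x ∈ P} :=
      fun k hk => step1 k hk x
    exact closure_minimal hsub hclosed hk
  have hstar_P : ∀ (k : T), k ∈ P → star k ∈ P := by
    have hstar_span : ∀ k ∈ Submodule.span ℂ S₁, star k ∈ P := by
      intro k hk
      induction hk using Submodule.span_induction with
      | mem s hs =>
          obtain ⟨a, b, ha, rfl⟩ := hs
          rw [hι_star a b]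
          refine Submodule.le_topologicalClosure _ (Submodule.subset_span ⟨star a, star b, ?_, rfl⟩)
          rw [map_star, ha, star_zero]
      | zero => rw [star_zero]; exact Submodule.zero_mem _
      | add k₁ k₂ _ _ h₁ h₂ => rw [star_add]; exact Submodule.add_mem _ h₁ h₂
      | smul c k _ h => rw [star_smul]; exact Submodule.smul_mem _ _ h
    intro k hk
    have hclosed : IsClosed {k : T | star k ∈ P} :=
      IsClosed.preimage continuous_star hP_closed
    exact closure_minimal (fun k hk => hstar_span k hk) hclosed hk
  set K₁ : CStarIdealData T :=
    { carrier := P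
      mul_mem_left' := fun x {k} hk => hmul_left_P x k hk
      mul_mem_right' := fun {k} x hk => hmul_right_P x k hk
      star_mem' := fun {k} hk => hstar_P k hk
      isClosed' := hP_closed } with hK₁_def
  -- p₁ is dominated by the quotient norm
  have hp₁_quot : ∀ t : T, ‖p₁ t‖ ≤ ‖K₁.qmk t‖ := by
    intro t
    refine le_of_forall_pos_le_add fun δ hδ => ?_
    obtain ⟨m, hm, hmlt⟩ := K₁.norm_mk_lt (K₁.qmk t) hδ
    have hmem : m - t ∈ P := (K₁.mk_eq_mk_iff).mp hm
    have hpm : p₁ m = p₁ t := by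
      have h0 : p₁ (m - t) = 0 := hp₁_vanish _ hmem
      rw [map_sub, sub_eq_zero] at h0
      exact h0
    calc ‖p₁ t‖ = ‖p₁ m‖ := by rw [hpm]
      _ ≤ ‖m‖ := hp₁_le m
      _ ≤ ‖K₁.qmk t‖ + δ := hmlt.le
  -- norm of qmk on elementary tensors
  have hqmk_norm : ∀ (a : 𝓒₁) (b : 𝓒₂), ‖K₁.qmk (ι (a ⊗ₜ[ℂ] b))‖ = ‖π₁ a‖ * ‖b‖ := by
    intro a b
    refine le_antisymm ?_ ?_
    · refine le_of_forall_pos_le_add fun ε hε => ?_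
      have hδ : (0:ℝ) < ε / (‖b‖ + 1) := by positivity
      obtain ⟨k, hk0, hklt⟩ := hdist a _ hδ
      have heq : K₁.qmk (ι (a ⊗ₜ[ℂ] b)) = K₁.qmk (ι ((a + k) ⊗ₜ[ℂ] b)) := by
        rw [K₁.mk_eq_mk_iff, ← map_sub, ← TensorProduct.sub_tmul]
        have : a - (a + k) = -k := by abel
        rw [this]
        refine Submodule.le_topologicalClosure _ (Submodule.subset_span ⟨-k, b, ?_, rfl⟩)
        rw [map_neg, hk0, neg_zero]
      calc ‖K₁.qmk (ι (a ⊗ₜ[ℂ] b))‖ = ‖K₁.qmk (ι ((a + k) ⊗ₜ[ℂ] b))‖ := by rw [heq]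
        _ ≤ ‖ι ((a + k) ⊗ₜ[ℂ] b)‖ := K₁.norm_mk_le _
        _ = ‖a + k‖ * ‖b‖ := hι_norm _ _
        _ ≤ (‖π₁ a‖ + ε / (‖b‖ + 1)) * ‖b‖ :=
            mul_le_mul_of_nonneg_right hklt.le (norm_nonneg b)
        _ ≤ ‖π₁ a‖ * ‖b‖ + ε := by
            rw [add_mul]
            have hb1 : ε / (‖b‖ + 1) * ‖b‖ ≤ ε := by
              rw [div_mul_eq_mul_div, div_le_iff₀ (by positivity)]
              have := norm_nonneg b
              nlinarith
            linarith
    · have h1 : ‖π₁ a‖ * ‖b‖ = ‖p₁ (ι (a ⊗ₜ[ℂ] b))‖ := by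
        rw [hp₁, Algebra.TensorProduct.map_tmul]
        exact (hι₁_norm (π₁ a) b).symm
      rw [h1]
      exact hp₁_quot _
  -- construct the induced representation j' of Q₁ ⊗ 𝓒₂ in K₁.Q
  let mkA : T →ₐ[ℂ] K₁.Q := K₁.mkHom.toAlgHom
  let φ₀ : 𝓒₁ →ₐ[ℂ] K₁.Q := mkA.comp (ι.comp Algebra.TensorProduct.includeLeft)
  have hφ₀ : ∀ k ∈ I₁.carrier, φ₀ k = 0 := by
    intro k hk
    show K₁.qmk (ι (k ⊗ₜ[ℂ] 1)) = 0
    rw [K₁.mk_eq_zero_iff]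
    exact Submodule.le_topologicalClosure _
      (Submodule.subset_span ⟨k, 1, (hI₁_mem k).mp hk, rfl⟩)
  let φ₁ : I₁.Q →ₐ[ℂ] K₁.Q := I₁.lift φ₀ hφ₀
  have hπb_surj : Function.Surjective πb := by
    intro q
    obtain ⟨a, rfl⟩ := hπ₁s q
    exact ⟨I₁.qmk a, rfl⟩
  let e₁ : I₁.Q ≃ₐ[ℂ] Q₁ := AlgEquiv.ofBijective πb ⟨hπs_inj, hπb_surj⟩
  have he₁_symm : ∀ a : 𝓒₁, e₁.symm (π₁ a) = I₁.qmk a := by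
    intro a
    have : e₁ (I₁.qmk a) = π₁ a := rfl
    rw [← this, AlgEquiv.symm_apply_apply]
  let φ : Q₁ →ₐ[ℂ] K₁.Q := φ₁.comp e₁.symm.toAlgHom
  have hφ_pi : ∀ a : 𝓒₁, φ (π₁ a) = K₁.qmk (ι (a ⊗ₜ[ℂ] 1)) := by
    intro a
    show φ₁ (e₁.symm (π₁ a)) = _
    rw [he₁_symm a]
    rfl
  let ψ : 𝓒₂ →ₐ[ℂ] K₁.Q := mkA.comp (ι.comp Algebra.TensorProduct.includeRight)
  have hψ_eval : ∀ b : 𝓒₂, ψ b = K₁.qmk (ι ((1:𝓒₁) ⊗ₜ[ℂ] b)) := fun b => rfl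
  have hmul₁ : ∀ (a : 𝓒₁) (b : 𝓒₂), φ (π₁ a) * ψ b = K₁.qmk (ι (a ⊗ₜ[ℂ] b)) := by
    intro a b
    rw [hφ_pi, hψ_eval, ← K₁.mk_mul, ← map_mul, Algebra.TensorProduct.tmul_mul_tmul,
      mul_one, one_mul]
  have hmul₂ : ∀ (a : 𝓒₁) (b : 𝓒₂), ψ b * φ (π₁ a) = K₁.qmk (ι (a ⊗ₜ[ℂ] b)) := by
    intro a b
    rw [hφ_pi, hψ_eval, ← K₁.mk_mul, ← map_mul, Algebra.TensorProduct.tmul_mul_tmul,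
      mul_one, one_mul]
  have hcomm : ∀ (q : Q₁) (b : 𝓒₂), Commute (φ q) (ψ b) := by
    intro q b
    obtain ⟨a, rfl⟩ := hπ₁s q
    show φ (π₁ a) * ψ b = ψ b * φ (π₁ a)
    rw [hmul₁, hmul₂]
  let j' : Q₁ ⊗[ℂ] 𝓒₂ →ₐ[ℂ] K₁.Q := Algebra.TensorProduct.lift φ ψ hcomm
  have hj'_tmul : ∀ (a : 𝓒₁) (b : 𝓒₂), j' (π₁ a ⊗ₜ[ℂ] b) = K₁.qmk (ι (a ⊗ₜ[ℂ] b)) := by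
    intro a b
    rw [show j' (π₁ a ⊗ₜ[ℂ] b) = φ (π₁ a) * ψ b from Algebra.TensorProduct.lift_tmul _ _ _ _ _]
    exact hmul₁ a b
  have hj'_map : ∀ x : 𝓒₁ ⊗[ℂ] 𝓒₂,
      j' (Algebra.TensorProduct.map π₁.toAlgHom (AlgHom.id ℂ 𝓒₂) x) = K₁.qmk (ι x) := by
    intro x
    induction x using TensorProduct.induction_on with
    | zero => simp only [map_zero]; rfl
    | tmul a b =>
        rw [Algebra.TensorProduct.map_tmul]
        exact hj'_tmul a b
    | add x₁ x₂ h₁ h₂ =>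
        rw [map_add, map_add, h₁, h₂, map_add]
        rfl
  have hmap_surj : Function.Surjective
      (Algebra.TensorProduct.map π₁.toAlgHom (AlgHom.id ℂ 𝓒₂)) := by
    intro z
    induction z using TensorProduct.induction_on with
    | zero => exact ⟨0, map_zero _⟩
    | tmul q b =>
        obtain ⟨a, rfl⟩ := hπ₁s q
        exact ⟨a ⊗ₜ[ℂ] b, by rw [Algebra.TensorProduct.map_tmul]; rfl⟩
    | add z₁ z₂ h₁ h₂ =>
        obtain ⟨x₁, rfl⟩ := h₁
        obtain ⟨x₂, rfl⟩ := h₂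
        exact ⟨x₁ + x₂, map_add _ _ _⟩
  have hj'_rep : IsTensorCStarRep j' := by
    refine ⟨?_, ?_, ?_⟩
    · rw [injective_iff_map_eq_zero]
      intro z hz
      obtain ⟨x, rfl⟩ := hmap_surj z
      rw [hj'_map] at hz
      have hmem : ι x ∈ P := (K₁.mk_eq_zero_iff).mp hz
      have h0 : p₁ (ι x) = 0 := hp₁_vanish _ hmem
      rw [hp₁] at h0
      have : Algebra.TensorProduct.map π₁.toAlgHom (AlgHom.id ℂ 𝓒₂) x = 0 := by
        apply hι₁_inj
        rw [h0, map_zero]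
      rw [this]
    · intro q b
      obtain ⟨a, rfl⟩ := hπ₁s q
      rw [hj'_tmul]
      have h1 : star (K₁.qmk (ι (a ⊗ₜ[ℂ] b))) = K₁.qmk (star (ι (a ⊗ₜ[ℂ] b))) := rfl
      rw [h1, hι_star a b, ← map_star π₁ a]
      exact (hj'_tmul (star a) (star b)).symm
    · intro q b
      obtain ⟨a, rfl⟩ := hπ₁s q
      rw [hj'_tmul]
      exact hqmk_norm a b
  -- nuclearity of 𝓒₂ gives equality of norms with ι₁
  have hnorm_eq : ∀ y : Q₁ ⊗[ℂ] 𝓒₂, ‖ι₁ y‖ = ‖j' y‖ := by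
    have h := hnuc Q₁ T₁ K₁.Q
      (ι₁.comp (Algebra.TensorProduct.comm ℂ 𝓒₂ Q₁).toAlgHom)
      (j'.comp (Algebra.TensorProduct.comm ℂ 𝓒₂ Q₁).toAlgHom)
      (IsTensorCStarRep.comm ⟨hι₁_inj, hι₁_star, hι₁_norm⟩)
      (IsTensorCStarRep.comm hj'_rep)
    intro y
    have hy := h ((Algebra.TensorProduct.comm ℂ Q₁ 𝓒₂) y)
    have hcc : (Algebra.TensorProduct.comm ℂ 𝓒₂ Q₁)
        ((Algebra.TensorProduct.comm ℂ Q₁ 𝓒₂) y) = y := by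
      rw [← Algebra.TensorProduct.comm_symm, AlgEquiv.symm_apply_apply]
    have e1 : (ι₁.comp (Algebra.TensorProduct.comm ℂ 𝓒₂ Q₁).toAlgHom)
        ((Algebra.TensorProduct.comm ℂ Q₁ 𝓒₂) y) = ι₁ y := by
      rw [AlgHom.comp_apply]
      exact congrArg ι₁ hcc
    have e2 : (j'.comp (Algebra.TensorProduct.comm ℂ 𝓒₂ Q₁).toAlgHom)
        ((Algebra.TensorProduct.comm ℂ Q₁ 𝓒₂) y) = j' y := by
      rw [AlgHom.comp_apply]
      exact congrArg j' hcc
    rw [← e1, ← e2]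
    exact hy
  -- conclude that the quotient norm equals ‖p₁ ·‖, by density
  have hfinal : ∀ t : T, ‖K₁.qmk t‖ = ‖p₁ t‖ := by
    have hfun : (fun t : T => ‖K₁.qmk t‖) = fun t : T => ‖p₁ t‖ := by
      refine Continuous.ext_on hιd (K₁.continuous_qmk.norm) (hp₁_cont.norm) ?_
      rintro _ ⟨x, rfl⟩
      show ‖K₁.qmk (ι x)‖ = ‖p₁ (ι x)‖
      rw [← hj'_map x, ← hnorm_eq, hp₁]
    intro t
    exact congrFun hfun t
  intro t
  constructor
  · intro ht
    have : ‖K₁.qmk t‖ = 0 := by rw [hfinal, ht, norm_zero]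
    have h0 : K₁.qmk t = 0 := norm_eq_zero.mp this
    exact (K₁.mk_eq_zero_iff).mp h0
  · intro ht
    exact hp₁_vanish t ht


end OneSided

section Intersection

open scoped Finset

lemma inter_subset_closure {𝓒₁ 𝓒₂ Q₁ Q₂ T : Type u}
    [NormedRing 𝓒₁] [StarRing 𝓒₁] [CStarRing 𝓒₁] [NormedAlgebra ℂ 𝓒₁] [StarModule ℂ 𝓒₁]
    [CompleteSpace 𝓒₁]
    [NormedRing 𝓒₂] [StarRing 𝓒₂] [CStarRing 𝓒₂] [NormedAlgebra ℂ 𝓒₂] [StarModule ℂ 𝓒₂]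
    [CompleteSpace 𝓒₂]
    [NormedRing Q₁] [StarRing Q₁] [NormedAlgebra ℂ Q₁] [StarModule ℂ Q₁]
    [NormedRing Q₂] [StarRing Q₂] [NormedAlgebra ℂ Q₂] [StarModule ℂ Q₂]
    [NormedRing T] [StarRing T] [CStarRing T] [NormedAlgebra ℂ T] [StarModule ℂ T]
    [CompleteSpace T]
    (π₁ : 𝓒₁ →⋆ₐ[ℂ] Q₁) (π₂ : 𝓒₂ →⋆ₐ[ℂ] Q₂)
    (ι : 𝓒₁ ⊗[ℂ] 𝓒₂ →ₐ[ℂ] T) (hι : IsTensorCStarRep ι) (t : T)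
    (h₁ : t ∈ closure ((Submodule.span ℂ
      {t : T | ∃ (a : 𝓒₁) (b : 𝓒₂), π₁ a = 0 ∧ t = ι (a ⊗ₜ[ℂ] b)} : Submodule ℂ T) : Set T))
    (h₂ : t ∈ closure ((Submodule.span ℂ
      {t : T | ∃ (a : 𝓒₁) (b : 𝓒₂), π₂ b = 0 ∧ t = ι (a ⊗ₜ[ℂ] b)} : Submodule ℂ T) : Set T)) :
    t ∈ closure ((Submodule.span ℂ
      {t : T | ∃ (a : 𝓒₁) (b : 𝓒₂), π₁ a = 0 ∧ π₂ b = 0 ∧ t = ι (a ⊗ₜ[ℂ] b)} :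
        Submodule ℂ T) : Set T) := by
  obtain ⟨hι_inj, hι_star, hι_norm⟩ := hι
  by_cases htriv : Subsingleton 𝓒₂
  · -- degenerate case: all elementary tensors vanish, so t = 0
    have hS : {t : T | ∃ (a : 𝓒₁) (b : 𝓒₂), π₁ a = 0 ∧ t = ι (a ⊗ₜ[ℂ] b)} ⊆ {0} := by
      rintro s ⟨a, b, ha, rfl⟩
      have hb : b = 0 := Subsingleton.elim b 0
      simp [hb, TensorProduct.tmul_zero]
    have hspan : Submodule.span ℂ {t : T | ∃ (a : 𝓒₁) (b : 𝓒₂), π₁ a = 0 ∧ t = ι (a ⊗ₜ[ℂ] b)}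
        ≤ ⊥ := by
      rw [← Submodule.span_zero_singleton (R := ℂ) (M := T)]
      exact Submodule.span_mono hS
    have ht0 : t = 0 := by
      have : closure ((Submodule.span ℂ
          {t : T | ∃ (a : 𝓒₁) (b : 𝓒₂), π₁ a = 0 ∧ t = ι (a ⊗ₜ[ℂ] b)} : Submodule ℂ T) : Set T)
          ⊆ closure ({0} : Set T) := by
        apply closure_mono
        intro s hs
        simpa using hspan hs
      have h0 := this h₁
      rwa [closure_singleton, Set.mem_singleton_iff] at h0
    rw [ht0]
    exact subset_closure (Submodule.zero_mem _)
  haveI : Nontrivial 𝓒₂ := not_subsingleton_iff_nontrivial.mp htriv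
  letI : CStarAlgebra 𝓒₁ :=
    { ‹NormedRing 𝓒₁›, ‹StarRing 𝓒₁›, ‹CStarRing 𝓒₁›, ‹NormedAlgebra ℂ 𝓒₁›, ‹StarModule ℂ 𝓒₁›,
      ‹CompleteSpace 𝓒₁› with }
  -- representation of span elements as finite sums of elementary tensors
  have hrep₁ : ∀ s ∈ Submodule.span ℂ
      {t : T | ∃ (a : 𝓒₁) (b : 𝓒₂), π₁ a = 0 ∧ t = ι (a ⊗ₜ[ℂ] b)},
      ∃ (n : ℕ) (aa : Fin n → 𝓒₁) (bb : Fin n → 𝓒₂),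
        (∀ i, π₁ (aa i) = 0) ∧ s = ∑ i, ι (aa i ⊗ₜ[ℂ] bb i) := by
    intro s hs
    induction hs using Submodule.span_induction with
    | mem x hx =>
        obtain ⟨a, b, ha, rfl⟩ := hx
        exact ⟨1, ![a], ![b], fun i => by simpa using ha, by simp [Fin.sum_univ_one]⟩
    | zero => exact ⟨0, ![], ![], fun i => i.elim0, by simp⟩
    | add x y hx hy ihx ihy =>
        obtain ⟨n, aa, bb, h1, rfl⟩ := ihx
        obtain ⟨m, cc, dd, h2, rfl⟩ := ihy
        refine ⟨n + m, Fin.append aa cc, Fin.append bb dd, ?_, ?_⟩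
        · intro i
          refine Fin.addCases (fun j => ?_) (fun j => ?_) i
          · rw [Fin.append_left]; exact h1 j
          · rw [Fin.append_right]; exact h2 j
        · rw [Fin.sum_univ_add]
          congr 1
          · exact Finset.sum_congr rfl fun i _ => by rw [Fin.append_left, Fin.append_left]
          · exact Finset.sum_congr rfl fun i _ => by rw [Fin.append_right, Fin.append_right]
    | smul c x hx ih =>
        obtain ⟨n, aa, bb, h1, rfl⟩ := ih
        refine ⟨n, fun i => c • aa i, bb, fun i => by rw [map_smul, h1 i, smul_zero], ?_⟩
        rw [Finset.smul_sum]
        refine Finset.sum_congr rfl fun i _ => ?_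
        rw [← map_smul ι, TensorProduct.smul_tmul']
  have hrep₂ : ∀ s ∈ Submodule.span ℂ
      {t : T | ∃ (a : 𝓒₁) (b : 𝓒₂), π₂ b = 0 ∧ t = ι (a ⊗ₜ[ℂ] b)},
      ∃ (m : ℕ) (cc : Fin m → 𝓒₁) (dd : Fin m → 𝓒₂),
        (∀ j, π₂ (dd j) = 0) ∧ s = ∑ j, ι (cc j ⊗ₜ[ℂ] dd j) := by
    intro s hs
    induction hs using Submodule.span_induction with
    | mem x hx =>
        obtain ⟨a, b, hb, rfl⟩ := hx
        exact ⟨1, ![a], ![b], fun i => by simpa using hb, by simp [Fin.sum_univ_one]⟩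
    | zero => exact ⟨0, ![], ![], fun i => i.elim0, by simp⟩
    | add x y hx hy ihx ihy =>
        obtain ⟨n, aa, bb, h1, rfl⟩ := ihx
        obtain ⟨m, cc, dd, h2, rfl⟩ := ihy
        refine ⟨n + m, Fin.append aa cc, Fin.append bb dd, ?_, ?_⟩
        · intro i
          refine Fin.addCases (fun j => ?_) (fun j => ?_) i
          · rw [Fin.append_left]; exact h1 j
          · rw [Fin.append_right]; exact h2 j
        · rw [Fin.sum_univ_add]
          congr 1
          · exact Finset.sum_congr rfl fun i _ => by rw [Fin.append_left, Fin.append_left]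
          · exact Finset.sum_congr rfl fun i _ => by rw [Fin.append_right, Fin.append_right]
    | smul c x hx ih =>
        obtain ⟨n, aa, bb, h1, rfl⟩ := ih
        refine ⟨n, fun i => c • aa i, bb, h1, ?_⟩
        rw [Finset.smul_sum]
        refine Finset.sum_congr rfl fun i _ => ?_
        rw [← map_smul ι, TensorProduct.smul_tmul']
  -- main approximation argument
  rw [Metric.mem_closure_iff]
  intro ε hε
  obtain ⟨s₁, hs₁mem, hs₁d⟩ := Metric.mem_closure_iff.mp h₁ (ε/4) (by positivity)
  obtain ⟨s₂, hs₂mem, hs₂d⟩ := Metric.mem_closure_iff.mp h₂ (ε/4) (by positivity)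
  obtain ⟨n, aa, bb, haa, hs₁⟩ := hrep₁ s₁ hs₁mem
  obtain ⟨m, cc, dd, hdd, hs₂⟩ := hrep₂ s₂ hs₂mem
  set B : ℝ := ∑ i, ‖bb i‖ with hB_def
  have hB0 : 0 ≤ B := Finset.sum_nonneg fun i _ => norm_nonneg _
  have hε' : (0:ℝ) < ε / (4 * (B + 1)) := by positivity
  obtain ⟨e, hesa, he1, -, ⟨u, heu⟩, hleft, -⟩ := cstar_approx_unit aa hε'
  have heπ : π₁ e = 0 := by
    rw [heu, map_mul]
    have : π₁ (∑ i, (aa i * star (aa i) + star (aa i) * aa i)) = 0 := by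
      rw [map_sum]
      refine Finset.sum_eq_zero fun i _ => ?_
      rw [map_add, map_mul, map_mul, haa i, zero_mul, map_star, haa i, star_zero, mul_zero,
        add_zero]
    rw [this, zero_mul]
  set E : T := ι (e ⊗ₜ[ℂ] (1:𝓒₂)) with hE_def
  have hE1 : ‖E‖ ≤ 1 := by
    rw [hE_def, hι_norm, CStarRing.norm_one, mul_one]
    exact he1
  have hEmul : ∀ (a : 𝓒₁) (b : 𝓒₂), E * ι (a ⊗ₜ[ℂ] b) = ι ((e * a) ⊗ₜ[ℂ] b) := by
    intro a b
    rw [hE_def, ← map_mul, Algebra.TensorProduct.tmul_mul_tmul, one_mul]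
  have hEs₁ : ‖E * s₁ - s₁‖ ≤ ε/4 := by
    have hsum : E * s₁ - s₁ = ∑ i, ι ((e * aa i - aa i) ⊗ₜ[ℂ] bb i) := by
      rw [hs₁, Finset.mul_sum, ← Finset.sum_sub_distrib]
      refine Finset.sum_congr rfl fun i _ => ?_
      rw [hEmul, TensorProduct.sub_tmul, map_sub]
    rw [hsum]
    calc ‖∑ i, ι ((e * aa i - aa i) ⊗ₜ[ℂ] bb i)‖
        ≤ ∑ i, ‖ι ((e * aa i - aa i) ⊗ₜ[ℂ] bb i)‖ := norm_sum_le _ _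
      _ ≤ ∑ i, (ε / (4 * (B + 1))) * ‖bb i‖ := by
          refine Finset.sum_le_sum fun i _ => ?_
          rw [hι_norm]
          exact mul_le_mul_of_nonneg_right (hleft i) (norm_nonneg _)
      _ = (ε / (4 * (B + 1))) * B := by rw [← Finset.mul_sum]
      _ ≤ ε / 4 := by
          rw [div_mul_eq_mul_div, div_le_div_iff₀ (by positivity) (by norm_num)]
          nlinarith
  have hts₁ : ‖t - s₁‖ < ε/4 := by rw [← dist_eq_norm]; exact hs₁d
  have hts₂ : ‖t - s₂‖ < ε/4 := by rw [← dist_eq_norm]; exact hs₂d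
  have hEt : ‖t - E * t‖ ≤ 3*ε/4 := by
    have h3 : ‖E * s₁ - E * t‖ ≤ ε/4 := by
      rw [← mul_sub]
      calc ‖E * (s₁ - t)‖ ≤ ‖E‖ * ‖s₁ - t‖ := norm_mul_le _ _
        _ ≤ ‖s₁ - t‖ := by
            have := norm_nonneg (s₁ - t); nlinarith
        _ ≤ ε/4 := by rw [norm_sub_rev]; exact hts₁.le
    calc ‖t - E * t‖ ≤ ‖t - s₁‖ + ‖s₁ - E * s₁‖ + ‖E * s₁ - E * t‖ := by
          have : t - E * t = (t - s₁) + (s₁ - E * s₁) + (E * s₁ - E * t) := by abel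
          rw [this]
          exact norm_add₃_le
      _ ≤ ε/4 + ε/4 + ε/4 := by
          refine add_le_add (add_le_add hts₁.le ?_) h3
          rw [norm_sub_rev]; exact hEs₁
      _ = 3*ε/4 := by ring
  have hEs₂mem : E * s₂ ∈ Submodule.span ℂ
      {t : T | ∃ (a : 𝓒₁) (b : 𝓒₂), π₁ a = 0 ∧ π₂ b = 0 ∧ t = ι (a ⊗ₜ[ℂ] b)} := by
    rw [hs₂, Finset.mul_sum]
    refine Submodule.sum_mem _ fun j _ => ?_
    rw [hEmul]
    refine Submodule.subset_span ⟨e * cc j, dd j, ?_, hdd j, rfl⟩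
    rw [map_mul, heπ, zero_mul]
  refine ⟨E * s₂, hEs₂mem, ?_⟩
  rw [dist_eq_norm]
  have hlast : ‖E * t - E * s₂‖ < ε/4 := by
    rw [← mul_sub]
    calc ‖E * (t - s₂)‖ ≤ ‖E‖ * ‖t - s₂‖ := norm_mul_le _ _
      _ ≤ ‖t - s₂‖ := by have := norm_nonneg (t - s₂); nlinarith
      _ < ε/4 := hts₂
  calc ‖t - E * s₂‖ ≤ ‖t - E * t‖ + ‖E * t - E * s₂‖ := by
        have : t - E * s₂ = (t - E * t) + (E * t - E * s₂) := by abel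
        rw [this]
        exact norm_add_le _ _
    _ < 3*ε/4 + ε/4 := by
        exact add_lt_add_of_le_of_lt hEt hlast
    _ = ε := by ring

end Intersection

/-- let `𝓒₁, 𝓒₂` be nuclear C*-algebras with closed two-sided ideals
`𝓘₁ = ker π₁`, `𝓘₂ = ker π₂` (the quotient maps `π_j : 𝓒_j → 𝓒_j/𝓘_j` being packaged as
given surjective continuous *-homomorphisms onto C*-algebras `Q_j`).  Realize the minimal
tensor products `T = 𝓒₁ ⊗ 𝓒₂`, `T₁ = (𝓒₁/𝓘₁) ⊗ 𝓒₂` and `T₂ = 𝓒₁ ⊗ (𝓒₂/𝓘₂)`, and let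
`p₁ = π₁ ⊗ 1 : T → T₁` and `p₂ = 1 ⊗ π₂ : T → T₂` be the induced *-homomorphisms.  Then
`π̄ = (p₁, p₂) : T → T₁ ⊕ T₂` is a *-homomorphism whose kernel is exactly the ideal
`𝓘₁ ⊗ 𝓘₂`, the closed span in `T` of the elementary tensors `a ⊗ b` with `a ∈ 𝓘₁`,
`b ∈ 𝓘₂`. -/
theorem kernel_of_tensor_quotient_maps {𝓒₁ 𝓒₂ Q₁ Q₂ T T₁ T₂ : Type u}
    [NormedRing 𝓒₁] [StarRing 𝓒₁] [CStarRing 𝓒₁] [NormedAlgebra ℂ 𝓒₁] [StarModule ℂ 𝓒₁]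
    [CompleteSpace 𝓒₁]
    [NormedRing 𝓒₂] [StarRing 𝓒₂] [CStarRing 𝓒₂] [NormedAlgebra ℂ 𝓒₂] [StarModule ℂ 𝓒₂]
    [CompleteSpace 𝓒₂]
    [NormedRing Q₁] [StarRing Q₁] [CStarRing Q₁] [NormedAlgebra ℂ Q₁] [StarModule ℂ Q₁]
    [CompleteSpace Q₁]
    [NormedRing Q₂] [StarRing Q₂] [CStarRing Q₂] [NormedAlgebra ℂ Q₂] [StarModule ℂ Q₂]
    [CompleteSpace Q₂]
    [NormedRing T] [StarRing T] [CStarRing T] [NormedAlgebra ℂ T] [StarModule ℂ T]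
    [CompleteSpace T]
    [NormedRing T₁] [StarRing T₁] [CStarRing T₁] [NormedAlgebra ℂ T₁] [StarModule ℂ T₁]
    [CompleteSpace T₁]
    [NormedRing T₂] [StarRing T₂] [CStarRing T₂] [NormedAlgebra ℂ T₂] [StarModule ℂ T₂]
    [CompleteSpace T₂]
    (h𝓒₁ : IsNuclearCStarAlgebra 𝓒₁) (h𝓒₂ : IsNuclearCStarAlgebra 𝓒₂)
    (π₁ : 𝓒₁ →⋆ₐ[ℂ] Q₁) (hπ₁s : Function.Surjective π₁) (hπ₁c : Continuous π₁)
    (π₂ : 𝓒₂ →⋆ₐ[ℂ] Q₂) (hπ₂s : Function.Surjective π₂) (hπ₂c : Continuous π₂)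
    (ι : 𝓒₁ ⊗[ℂ] 𝓒₂ →ₐ[ℂ] T) (hι : IsMinimalTensorRep ι)
    (ι₁ : Q₁ ⊗[ℂ] 𝓒₂ →ₐ[ℂ] T₁) (hι₁ : IsMinimalTensorRep ι₁)
    (ι₂ : 𝓒₁ ⊗[ℂ] Q₂ →ₐ[ℂ] T₂) (hι₂ : IsMinimalTensorRep ι₂)
    (p₁ : T →⋆ₐ[ℂ] T₁) (hp₁c : Continuous p₁)
    (hp₁ : ∀ x : 𝓒₁ ⊗[ℂ] 𝓒₂,
      p₁ (ι x) = ι₁ (Algebra.TensorProduct.map π₁.toAlgHom (AlgHom.id ℂ 𝓒₂) x))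
    (p₂ : T →⋆ₐ[ℂ] T₂) (hp₂c : Continuous p₂)
    (hp₂ : ∀ x : 𝓒₁ ⊗[ℂ] 𝓒₂,
      p₂ (ι x) = ι₂ (Algebra.TensorProduct.map (AlgHom.id ℂ 𝓒₁) π₂.toAlgHom x)) :
    -- `π̄ = (p₁, p₂)` is a *-homomorphism into `T₁ ⊕ T₂` …
    (∀ x y : T, ((p₁ (x * y), p₂ (x * y)) : T₁ × T₂) = (p₁ x * p₁ y, p₂ x * p₂ y)) ∧
    (∀ x y : T, ((p₁ (x + y), p₂ (x + y)) : T₁ × T₂) = (p₁ x + p₁ y, p₂ x + p₂ y)) ∧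
    (∀ x : T, ((p₁ (star x), p₂ (star x)) : T₁ × T₂) = (star (p₁ x), star (p₂ x))) ∧
    -- … with kernel the minimal tensor product `𝓘₁ ⊗ 𝓘₂` of the two ideals:
    {t : T | p₁ t = 0 ∧ p₂ t = 0}
      = closure ((Submodule.span ℂ
          {t : T | ∃ (a : 𝓒₁) (b : 𝓒₂), π₁ a = 0 ∧ π₂ b = 0 ∧ t = ι (a ⊗ₜ[ℂ] b)} :
            Submodule ℂ T) : Set T) := by

  obtain ⟨hι_rep, hιd, -⟩ := hι
  obtain ⟨hι₁_rep, -, -⟩ := hι₁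
  obtain ⟨hι₂_rep, -, -⟩ := hι₂
  -- Step A for the first factor
  have hker₁ := ker_one_sided h𝓒₂ π₁ hπ₁s hπ₁c ι hι_rep hιd ι₁ hι₁_rep p₁ hp₁
  -- Step A for the second factor, via the commutor
  have hker₂ : ∀ t : T, p₂ t = 0 ↔
      t ∈ closure ((Submodule.span ℂ
        {t : T | ∃ (a : 𝓒₁) (b : 𝓒₂), π₂ b = 0 ∧ t = ι (a ⊗ₜ[ℂ] b)} : Submodule ℂ T) : Set T) := by
    set ι' : 𝓒₂ ⊗[ℂ] 𝓒₁ →ₐ[ℂ] T :=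
      ι.comp (Algebra.TensorProduct.comm ℂ 𝓒₂ 𝓒₁).toAlgHom with hι'_def
    have hι'_rep : IsTensorCStarRep ι' := IsTensorCStarRep.comm hι_rep
    have hι'd : DenseRange ι' := by
      have hr : Set.range ⇑ι' = Set.range ⇑ι := by
        rw [hι'_def, AlgHom.coe_comp, Set.range_comp,
          Set.range_eq_univ.mpr (fun x => ⟨(Algebra.TensorProduct.comm ℂ 𝓒₂ 𝓒₁).symm x, by simp⟩),
          Set.image_univ]
      unfold DenseRange
      rw [hr]
      exact hιd
    set ι₂' : Q₂ ⊗[ℂ] 𝓒₁ →ₐ[ℂ] T₂ :=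
      ι₂.comp (Algebra.TensorProduct.comm ℂ Q₂ 𝓒₁).toAlgHom with hι₂'_def
    have hι₂'_rep : IsTensorCStarRep ι₂' := IsTensorCStarRep.comm hι₂_rep
    have hp₂' : ∀ y : 𝓒₂ ⊗[ℂ] 𝓒₁,
        p₂ (ι' y) = ι₂' (Algebra.TensorProduct.map π₂.toAlgHom (AlgHom.id ℂ 𝓒₁) y) := by
      intro y
      induction y using TensorProduct.induction_on with
      | zero => simp only [map_zero]
      | tmul b a =>
          have h1 : ι' (b ⊗ₜ[ℂ] a) = ι (a ⊗ₜ[ℂ] b) := by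
            simp [hι'_def, Algebra.TensorProduct.comm_tmul]
          have h2 : ι₂' (Algebra.TensorProduct.map π₂.toAlgHom (AlgHom.id ℂ 𝓒₁) (b ⊗ₜ[ℂ] a))
              = ι₂ (a ⊗ₜ[ℂ] π₂ b) := by
            simp [hι₂'_def, Algebra.TensorProduct.comm_tmul]
          rw [h1, h2, hp₂ (a ⊗ₜ[ℂ] b), Algebra.TensorProduct.map_tmul]
          rfl
      | add y₁ y₂ hy₁ hy₂ => rw [map_add, map_add, map_add, map_add, hy₁, hy₂]
    have h := ker_one_sided h𝓒₁ π₂ hπ₂s hπ₂c ι' hι'_rep hι'd ι₂' hι₂'_rep p₂ hp₂'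
    have hset : {t : T | ∃ (b : 𝓒₂) (a : 𝓒₁), π₂ b = 0 ∧ t = ι' (b ⊗ₜ[ℂ] a)}
        = {t : T | ∃ (a : 𝓒₁) (b : 𝓒₂), π₂ b = 0 ∧ t = ι (a ⊗ₜ[ℂ] b)} := by
      ext s
      constructor
      · rintro ⟨b, a, hb, rfl⟩
        exact ⟨a, b, hb, by simp [hι'_def, Algebra.TensorProduct.comm_tmul]⟩
      · rintro ⟨a, b, hb, rfl⟩
        exact ⟨b, a, hb, by simp [hι'_def, Algebra.TensorProduct.comm_tmul]⟩
    intro t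
    rw [h t, hset]
  refine ⟨fun x y => by rw [map_mul, map_mul], fun x y => by rw [map_add, map_add],
    fun x => by rw [map_star, map_star], ?_⟩
  ext t
  simp only [Set.mem_setOf_eq, SetLike.mem_coe]
  constructor
  · rintro ⟨ht₁, ht₂⟩
    exact inter_subset_closure π₁ π₂ ι hι_rep t ((hker₁ t).mp ht₁) ((hker₂ t).mp ht₂)
  · intro ht
    have hsub₁ : {t : T | ∃ (a : 𝓒₁) (b : 𝓒₂), π₁ a = 0 ∧ π₂ b = 0 ∧ t = ι (a ⊗ₜ[ℂ] b)}
        ⊆ {t : T | ∃ (a : 𝓒₁) (b : 𝓒₂), π₁ a = 0 ∧ t = ι (a ⊗ₜ[ℂ] b)} := by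
      rintro s ⟨a, b, h1, h2, rfl⟩; exact ⟨a, b, h1, rfl⟩
    have hsub₂ : {t : T | ∃ (a : 𝓒₁) (b : 𝓒₂), π₁ a = 0 ∧ π₂ b = 0 ∧ t = ι (a ⊗ₜ[ℂ] b)}
        ⊆ {t : T | ∃ (a : 𝓒₁) (b : 𝓒₂), π₂ b = 0 ∧ t = ι (a ⊗ₜ[ℂ] b)} := by
      rintro s ⟨a, b, h1, h2, rfl⟩; exact ⟨a, b, h2, rfl⟩
    constructor
    · exact (hker₁ t).mpr (closure_mono (Submodule.span_mono hsub₁) ht)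
    · exact (hker₂ t).mpr (closure_mono (Submodule.span_mono hsub₂) ht)
end
end
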